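/- arXiv:math/9908049 — 4 statements merged into one kernel-verified Lean document; each statement's English description precedes it below -/
import Mathlib

section
/- If a Banach space X has the bounded approximation property with constant λ, then X satisfies property (P): there is a constant C such that every finite rank operator u : X → X can be written as u = Σₙ vₙwₙ with finite rank operators vₙ, wₙ : X → X satisfying Σₙ ‖vₙ‖·‖wₙ‖ ≤ C‖u‖. -/
/-!
Given a finite rank operator `u`, set `r₀ = u` and, using the bounded approximation property on
the compact set `rₙ(B_X)`, pick a finite rank `Tₙ` with `‖Tₙ‖ ≤ λ` and
`‖rₙ - Tₙ rₙ‖ ≤ ‖rₙ‖ / 2`; put `rₙ₊₁ = rₙ - Tₙ rₙ`. The series `∑ Tₙ rₙ` telescopes to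
`u - rₙ → u`, and `∑ ‖Tₙ‖ ‖rₙ‖ ≤ ∑ λ ‖u‖ / 2ⁿ = 2λ‖u‖`.
-/

open scoped BigOperators
noncomputable section

/-- `sup { (∑ |ξ(xᵢ)|^p)^{1/p} : ξ ∈ X*, ‖ξ‖ ≤ 1 }`. -/
def weakLpNorm (p : ℝ) {X : Type*} [NormedAddCommGroup X] [NormedSpace ℝ X]
    {n : ℕ} (x : Fin n → X) : ℝ :=
  ⨆ ξ : {ξ : X →L[ℝ] ℝ // ‖ξ‖ ≤ 1}, (∑ i, |ξ.1 (x i)| ^ p) ^ (1/p)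

/-- `u` is `(q,p)`-summing with constant `C`. -/
def IsQPSummingWith (q p : ℝ) {X Y : Type*} [NormedAddCommGroup X] [NormedSpace ℝ X]
    [NormedAddCommGroup Y] [NormedSpace ℝ Y] (u : X →L[ℝ] Y) (C : ℝ) : Prop :=
  ∀ (n : ℕ) (x : Fin n → X), (∑ i, ‖u (x i)‖ ^ q) ^ (1/q) ≤ C * weakLpNorm p x

/-- The `(q,p)`-summing norm `π_{q,p}(u)`. -/
def piQP (q p : ℝ) {X Y : Type*} [NormedAddCommGroup X] [NormedSpace ℝ X]
    [NormedAddCommGroup Y] [NormedSpace ℝ Y] (u : X →L[ℝ] Y) : ℝ :=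
  sInf {C | 0 ≤ C ∧ IsQPSummingWith q p u C}

/-- A bounded operator has finite rank if its range is finite dimensional. -/
def FiniteRank {X Y : Type*} [NormedAddCommGroup X] [NormedSpace ℝ X]
    [NormedAddCommGroup Y] [NormedSpace ℝ Y] (u : X →L[ℝ] Y) : Prop :=
  FiniteDimensional ℝ (LinearMap.range (u : X →ₗ[ℝ] Y))

/-- Property (P): every finite rank operator factors as a norm-convergent sum
`u = ∑ vₙ ∘ wₙ` of products of finite rank operators with `∑ ‖vₙ‖‖wₙ‖ ≤ C‖u‖`. -/
def PropertyP (X : Type*) [NormedAddCommGroup X] [NormedSpace ℝ X] : Prop :=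
  ∃ C : ℝ, ∀ u : X →L[ℝ] X, FiniteRank u →
    ∃ v w : ℕ → X →L[ℝ] X, (∀ n, FiniteRank (v n)) ∧ (∀ n, FiniteRank (w n)) ∧
      HasSum (fun n => (v n).comp (w n)) u ∧
      Summable (fun n => ‖v n‖ * ‖w n‖) ∧
      ∑' n, ‖v n‖ * ‖w n‖ ≤ C * ‖u‖

/-- The Rademacher functions on `[0,1]`. -/
def rademacher (n : ℕ) (t : ℝ) : ℝ := (-1 : ℝ) ^ ⌊(2 : ℝ) ^ (n + 1) * t⌋

/-- `X` has cotype `q` with constant `C`. -/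
def HasCotypeWith (q : ℝ) (X : Type*) [NormedAddCommGroup X] [NormedSpace ℝ X]
    (C : ℝ) : Prop :=
  ∀ (n : ℕ) (x : Fin n → X),
    (∑ i, ‖x i‖ ^ q) ^ (1/q) ≤
      C * (∫ t in (0:ℝ)..1, ‖∑ i, rademacher i.1 t • x i‖ ^ 2) ^ (1/(2:ℝ))

open Filter Topology Finset

section Remainders

variable {R : Type*} [NormedRing R] (t : R → R) (u : R)

def remainderSeq (n : ℕ) : R := (fun r => r - t r * r)^[n] u

theorem remainderSeq_zero : remainderSeq t u 0 = u := rfl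

theorem remainderSeq_succ (n : ℕ) :
    remainderSeq t u (n + 1) = remainderSeq t u n - t (remainderSeq t u n) * remainderSeq t u n :=
  Function.iterate_succ_apply' _ _ _

theorem sum_range_mul_remainderSeq (N : ℕ) :
    ∑ i ∈ range N, t (remainderSeq t u i) * remainderSeq t u i = u - remainderSeq t u N := by
  induction N with
  | zero => simp [remainderSeq_zero]
  | succ N ih =>
    rw [sum_range_succ, ih, remainderSeq_succ]
    abel

variable {t u} {S : Set R} (hS : ∀ a, ∀ r ∈ S, a * r ∈ S) (hu : u ∈ S)
include hS hu

theorem remainderSeq_mem (n : ℕ) : remainderSeq t u n ∈ S := by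
  induction n with
  | zero => exact hu
  | succ n ih =>
    rw [remainderSeq_succ, ← one_sub_mul]
    exact hS _ _ ih

variable (hhalf : ∀ r ∈ S, ‖r - t r * r‖ ≤ ‖r‖ / 2)
include hhalf

theorem norm_remainderSeq_le (n : ℕ) : ‖remainderSeq t u n‖ ≤ ‖u‖ / 2 ^ n := by
  induction n with
  | zero => simp [remainderSeq_zero]
  | succ n ih =>
    rw [remainderSeq_succ]
    calc _ ≤ ‖remainderSeq t u n‖ / 2 := hhalf _ (remainderSeq_mem hS hu n)
      _ ≤ ‖u‖ / 2 ^ n / 2 := by gcongr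
      _ = ‖u‖ / 2 ^ (n + 1) := by rw [pow_succ, div_div]

variable {lam : ℝ} (hbound : ∀ r ∈ S, ‖t r‖ ≤ lam)
include hbound

theorem norm_mul_norm_remainderSeq_le (n : ℕ) :
    ‖t (remainderSeq t u n)‖ * ‖remainderSeq t u n‖ ≤ lam * ‖u‖ * (1 / 2) ^ n := by
  have hlam : 0 ≤ lam := (norm_nonneg _).trans (hbound u hu)
  calc _ ≤ lam * (‖u‖ / 2 ^ n) :=
        mul_le_mul (hbound _ (remainderSeq_mem hS hu n)) (norm_remainderSeq_le hS hu hhalf n)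
          (norm_nonneg _) hlam
    _ = lam * ‖u‖ * (1 / 2) ^ n := by rw [one_div_pow, mul_one_div, mul_div_assoc]

theorem summable_norm_mul_norm_remainderSeq :
    Summable fun n => ‖t (remainderSeq t u n)‖ * ‖remainderSeq t u n‖ :=
  (summable_geometric_two.mul_left (lam * ‖u‖)).of_nonneg_of_le (fun _ => by positivity)
    (norm_mul_norm_remainderSeq_le hS hu hhalf hbound)

theorem tsum_norm_mul_norm_remainderSeq_le :
    ∑' n, ‖t (remainderSeq t u n)‖ * ‖remainderSeq t u n‖ ≤ 2 * lam * ‖u‖ :=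
  calc _ ≤ ∑' n : ℕ, lam * ‖u‖ * (1 / 2 : ℝ) ^ n :=
        (summable_norm_mul_norm_remainderSeq hS hu hhalf hbound).tsum_le_tsum
          (norm_mul_norm_remainderSeq_le hS hu hhalf hbound)
          (summable_geometric_two.mul_left _)
    _ = 2 * lam * ‖u‖ := by rw [tsum_mul_left, tsum_geometric_two]; ring

theorem hasSum_mul_remainderSeq :
    HasSum (fun n => t (remainderSeq t u n) * remainderSeq t u n) u := by
  have hsummable : Summable fun n => ‖t (remainderSeq t u n) * remainderSeq t u n‖ :=
    (summable_norm_mul_norm_remainderSeq hS hu hhalf hbound).of_nonneg_of_le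
      (fun _ => norm_nonneg _) fun _ => norm_mul_le _ _
  rw [hasSum_iff_tendsto_nat_of_summable_norm hsummable]
  simp_rw [sum_range_mul_remainderSeq]
  have hr : Tendsto (remainderSeq t u) atTop (𝓝 0) := by
    refine squeeze_zero_norm (norm_remainderSeq_le hS hu hhalf) ?_
    simpa [div_eq_mul_inv] using
      (tendsto_pow_atTop_nhds_zero_of_lt_one (r := (1 / 2 : ℝ)) (by norm_num) (by norm_num)).const_mul
        ‖u‖
  simpa using hr.const_sub u

end Remainders

section FiniteRank

variable {X Y Z : Type*} [NormedAddCommGroup X] [NormedSpace ℝ X]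
  [NormedAddCommGroup Y] [NormedSpace ℝ Y] [NormedAddCommGroup Z] [NormedSpace ℝ Z]

theorem FiniteRank.comp {g : X →L[ℝ] Y} (hg : FiniteRank g) (f : Y →L[ℝ] Z) :
    FiniteRank (f.comp g) := by
  unfold FiniteRank at *
  rw [ContinuousLinearMap.toLinearMap_comp, LinearMap.range_comp]
  exact Module.Finite.map _ _

theorem FiniteRank.isCompactOperator {r : X →L[ℝ] Y} (hr : FiniteRank r) :
    IsCompactOperator r := by
  have : FiniteDimensional ℝ (LinearMap.range (r : X →ₗ[ℝ] Y)) := hr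
  have : ProperSpace (LinearMap.range (r : X →ₗ[ℝ] Y)) := FiniteDimensional.proper ℝ _
  exact (isCompactOperator_of_locallyCompactSpace_dom
    (r.codRestrict _ (LinearMap.mem_range_self _))).continuous_comp continuous_subtype_val

end FiniteRank

def HasBoundedApproximationProperty (lam : ℝ) (X : Type*) [NormedAddCommGroup X]
    [NormedSpace ℝ X] : Prop :=
  ∀ K : Set X, IsCompact K → ∀ ε > 0, ∃ T : X →L[ℝ] X,
    FiniteRank T ∧ ‖T‖ ≤ lam ∧ ∀ x ∈ K, ‖T x - x‖ ≤ ε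

namespace HasBoundedApproximationProperty

variable {X Y : Type*} [NormedAddCommGroup X] [NormedSpace ℝ X]
  [NormedAddCommGroup Y] [NormedSpace ℝ Y] {lam : ℝ}

theorem exists_norm_sub_comp_le (h : HasBoundedApproximationProperty lam X)
    {r : Y →L[ℝ] X} (hr : IsCompactOperator r) {ε : ℝ} (hε : 0 < ε) :
    ∃ T : X →L[ℝ] X, FiniteRank T ∧ ‖T‖ ≤ lam ∧ ‖r - T.comp r‖ ≤ ε := by
  obtain ⟨K, hK, hrK⟩ := hr.image_closedBall_subset_compact 1
  obtain ⟨T, hT, hTlam, hTK⟩ := h K hK ε hε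
  refine ⟨T, hT, hTlam, ?_⟩
  rw [norm_sub_rev]
  refine ContinuousLinearMap.opNorm_le_of_unit_norm hε.le fun y hy => ?_
  exact hTK _ (hrK ⟨y, by simp [hy], rfl⟩)

theorem exists_norm_sub_mul_le_half (h : HasBoundedApproximationProperty lam X)
    {r : X →L[ℝ] X} (hr : IsCompactOperator r) :
    ∃ T : X →L[ℝ] X, FiniteRank T ∧ ‖T‖ ≤ lam ∧ ‖r - T * r‖ ≤ ‖r‖ / 2 := by
  rcases eq_or_ne r 0 with rfl | hr0
  · obtain ⟨T, hT, hTlam, -⟩ := h ∅ isCompact_empty 1 one_pos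
    exact ⟨T, hT, hTlam, by simp⟩
  · exact h.exists_norm_sub_comp_le hr (by positivity)

end HasBoundedApproximationProperty

theorem bap_implies_propertyP_general (X : Type*) [NormedAddCommGroup X] [NormedSpace ℝ X]
    (lam : ℝ)
    (hBAP : ∀ K : Set X, IsCompact K → ∀ ε > 0, ∃ T : X →L[ℝ] X,
      FiniteRank T ∧ ‖T‖ ≤ lam ∧ ∀ x ∈ K, ‖T x - x‖ ≤ ε) :
    PropertyP X := by
  have hX : HasBoundedApproximationProperty lam X := hBAP
  choose! T hT hTlam hThalf using
    fun r (hr : FiniteRank r) => hX.exists_norm_sub_mul_le_half hr.isCompactOperator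
  have hS : ∀ a : X →L[ℝ] X, ∀ r ∈ {r | FiniteRank r}, a * r ∈ {r | FiniteRank r} :=
    fun a _ hr => FiniteRank.comp hr a
  refine ⟨2 * lam, fun u hu => ⟨fun n => T (remainderSeq T u n), remainderSeq T u,
    fun n => hT _ (remainderSeq_mem hS hu n), remainderSeq_mem hS hu,
    hasSum_mul_remainderSeq hS hu hThalf hTlam,
    summable_norm_mul_norm_remainderSeq hS hu hThalf hTlam,
    tsum_norm_mul_norm_remainderSeq_le hS hu hThalf hTlam⟩⟩

/-- the λ-bounded approximation property implies property (P). -/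
theorem bap_implies_propertyP (X : Type*) [NormedAddCommGroup X] [NormedSpace ℝ X]
    [CompleteSpace X] (lam : ℝ)
    (hBAP : ∀ K : Set X, IsCompact K → ∀ ε > 0, ∃ T : X →L[ℝ] X,
      FiniteRank T ∧ ‖T‖ ≤ lam ∧ ∀ x ∈ K, ‖T x - x‖ ≤ ε) :
    PropertyP X :=
  bap_implies_propertyP_general X lam hBAP
end
end

section
/- Let q > 2 and for a sequence a = (a_n) let D_a : ℓ∞ → ℓ_q be the diagonal multiplication operator D_a(x) = (a_n x_n). Then there exists a bounded diagonal operator D_a : ℓ∞ → ℓ_q, namely with a ∈ ℓ_q and a ∉ ℓ₂, that is not 2-summing. -/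
open scoped BigOperators
noncomputable section

set_option maxHeartbeats 1000000 in
/-- for `q > 2` there is a bounded diagonal operator
`D_a : ℓ∞ → ℓ_q` (with `a ∈ ℓ_q \ ℓ₂`) which is not 2-summing. -/
theorem exists_diagonal_not_two_summing (q : ℝ) (hq : 2 < q) [Fact (1 ≤ ENNReal.ofReal q)] :
    ∃ a : ℕ → ℝ, Memℓp a (ENNReal.ofReal q) ∧ ¬ Memℓp a 2 ∧
      ∃ D : lp (fun _ : ℕ => ℝ) ⊤ →L[ℝ] lp (fun _ : ℕ => ℝ) (ENNReal.ofReal q),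
        (∀ (x : lp (fun _ : ℕ => ℝ) ⊤) (n : ℕ),
          (D x : ∀ _ : ℕ, ℝ) n = a n * (x : ∀ _ : ℕ, ℝ) n) ∧
        ¬ ∃ C, 0 ≤ C ∧ IsQPSummingWith 2 2 D C := by
  have hq0 : (0:ℝ) < q := by linarith
  set P := ENNReal.ofReal q with hP
  have hPt : P.toReal = q := ENNReal.toReal_ofReal hq0.le
  have hPt0 : 0 < P.toReal := by rw [hPt]; exact hq0
  set a : ℕ → ℝ := fun n => ((n:ℝ)+1) ^ (-(1/2) : ℝ) with ha_def
  have ha_pos : ∀ n, 0 < a n := fun n => Real.rpow_pos_of_pos (by positivity) _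
  have ha_norm : ∀ (n : ℕ) (r : ℝ), ‖a n‖ ^ r = ((n:ℝ)+1) ^ (-(1/2) * r) := by
    intro n r
    rw [Real.norm_eq_abs, abs_of_pos (ha_pos n), ha_def,
      ← Real.rpow_mul (by positivity : (0:ℝ) ≤ (n:ℝ)+1)]
  -- a ∈ ℓ_q
  have haq : Memℓp a P := by
    apply memℓp_gen
    have h1 : Summable (fun n : ℕ => 1 / ((n:ℝ)) ^ (q/2)) :=
      Real.summable_one_div_nat_rpow.2 (by linarith)
    have h2 := (summable_nat_add_iff 1).2 h1
    refine h2.congr fun n => ?_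
    rw [hPt, ha_norm n q]
    push_cast
    rw [one_div, ← Real.rpow_neg (by positivity : (0:ℝ) ≤ (n:ℝ)+1)]
    congr 1
    ring
  -- a ∉ ℓ₂
  have hterm2 : ∀ n : ℕ, ‖a n‖ ^ (2:ℝ) = 1 / ((n:ℝ)+1) := by
    intro n
    rw [ha_norm n 2]
    norm_num [Real.rpow_neg_one]
  have ha2 : ¬ Memℓp a 2 := by
    intro h
    have hs : Summable fun n => ‖a n‖ ^ ((2:ENNReal)).toReal := h.summable (by norm_num)
    have hs' : Summable fun n : ℕ => 1 / ((n:ℝ)+1) := by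
      refine hs.congr fun n => ?_
      rw [show ((2:ENNReal)).toReal = (2:ℝ) by norm_num, hterm2 n]
    have : Summable fun n : ℕ => 1 / ((n:ℝ)) := by
      rw [← summable_nat_add_iff 1]
      refine hs'.congr fun n => ?_
      push_cast
      ring_nf
    exact Real.not_summable_one_div_natCast this
  refine ⟨a, haq, ha2, ?_⟩
  -- the diagonal operator
  set A : lp (fun _ : ℕ => ℝ) P := ⟨a, haq⟩ with hA
  have hAnn : ∀ n, A n = a n := fun n => rfl
  have hdom : ∀ (x : lp (fun _ : ℕ => ℝ) ⊤) (n : ℕ),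
      ‖a n * (x : ∀ _ : ℕ, ℝ) n‖ ^ P.toReal ≤ ‖x‖ ^ q * ‖a n‖ ^ q := by
    intro x n
    rw [hPt]
    calc ‖a n * (x : ∀ _ : ℕ, ℝ) n‖ ^ q ≤ (‖a n‖ * ‖x‖) ^ q := by
          apply Real.rpow_le_rpow (norm_nonneg _) ?_ hq0.le
          rw [norm_mul]
          exact mul_le_mul_of_nonneg_left
            (lp.norm_apply_le_norm ENNReal.top_ne_zero x n) (norm_nonneg _)
      _ = ‖x‖ ^ q * ‖a n‖ ^ q := by
          rw [Real.mul_rpow (norm_nonneg _) (norm_nonneg _)]; ring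
  have hmem : ∀ x : lp (fun _ : ℕ => ℝ) ⊤, Memℓp (fun n => a n * (x : ∀ _ : ℕ, ℝ) n) P := by
    intro x
    apply memℓp_gen
    refine Summable.of_nonneg_of_le (fun n => Real.rpow_nonneg (norm_nonneg _) _)
      (hdom x) ?_
    have := (haq.summable hPt0).mul_left (‖x‖ ^ q)
    rw [hPt] at this
    exact this
  set L : lp (fun _ : ℕ => ℝ) ⊤ →ₗ[ℝ] lp (fun _ : ℕ => ℝ) P :=
    { toFun := fun x => ⟨fun n => a n * (x : ∀ _ : ℕ, ℝ) n, hmem x⟩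
      map_add' := by
        intro x y
        apply lp.ext
        funext n
        simp [lp.coeFn_add, mul_add]
        rfl
      map_smul' := by
        intro c x
        apply lp.ext
        funext n
        simp [lp.coeFn_smul, smul_eq_mul]
        ring } with hL
  have hbound : ∀ x, ‖L x‖ ≤ ‖A‖ * ‖x‖ := by
    intro x
    apply lp.norm_le_of_forall_sum_le hPt0 (by positivity)
    intro s
    calc ∑ i ∈ s, ‖(L x : ∀ _ : ℕ, ℝ) i‖ ^ P.toReal
        ≤ ∑ i ∈ s, ‖x‖ ^ q * ‖a i‖ ^ q := Finset.sum_le_sum fun i _ => hdom x i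
      _ = ‖x‖ ^ q * ∑ i ∈ s, ‖a i‖ ^ q := by rw [Finset.mul_sum]
      _ ≤ ‖x‖ ^ q * ‖A‖ ^ q := by
          apply mul_le_mul_of_nonneg_left ?_ (by positivity)
          have := lp.sum_rpow_le_norm_rpow hPt0 A s
          rw [hPt] at this
          exact this
      _ = (‖A‖ * ‖x‖) ^ P.toReal := by
          rw [hPt, Real.mul_rpow (norm_nonneg _) (norm_nonneg _)]; ring
  set D := L.mkContinuous ‖A‖ hbound with hD
  have hDcoord : ∀ (x : lp (fun _ : ℕ => ℝ) ⊤) (n : ℕ),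
      (D x : ∀ _ : ℕ, ℝ) n = a n * (x : ∀ _ : ℕ, ℝ) n := fun x n => rfl
  refine ⟨D, hDcoord, ?_⟩
  rintro ⟨C, hC0, hC⟩
  have key : ∀ n : ℕ, ∑ i ∈ Finset.range n, (1/((i:ℝ)+1)) ≤ C^2 := by
    intro n
    set x : Fin n → lp (fun _ : ℕ => ℝ) ⊤ := fun i => lp.single ⊤ i.1 (1:ℝ) with hx
    -- weak norm bound
    have hweak : weakLpNorm 2 x ≤ 1 := by
      have hne : Nonempty {ξ : lp (fun _ : ℕ => ℝ) ⊤ →L[ℝ] ℝ // ‖ξ‖ ≤ 1} :=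
        ⟨⟨0, by simp⟩⟩
      apply ciSup_le
      rintro ⟨ξ, hξ⟩
      have hsum1 : ∑ i : Fin n, |ξ (x i)| ≤ 1 := by
        set s : Fin n → ℝ := fun i => if 0 ≤ ξ (x i) then (1:ℝ) else -1 with hs
        set y : lp (fun _ : ℕ => ℝ) ⊤ := ∑ i : Fin n, s i • x i with hy
        have hyj : ∀ j : ℕ, ‖(y : ∀ _ : ℕ, ℝ) j‖ ≤ 1 := by
          intro j
          have hyjc : (y : ∀ _ : ℕ, ℝ) j = ∑ i : Fin n, s i * (x i : ∀ _ : ℕ, ℝ) j := by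
            rw [hy, lp.coeFn_sum, Finset.sum_apply]
            refine Finset.sum_congr rfl fun i _ => ?_
            rw [lp.coeFn_smul]; rfl
          rw [hyjc]
          by_cases h : j < n
          · rw [Finset.sum_eq_single_of_mem (⟨j, h⟩ : Fin n) (Finset.mem_univ _)
              (fun b _ hb => by
                have hjb : j ≠ b.1 := fun hjb => hb (by ext; exact hjb.symm)
                simp only [hx]
                rw [lp.single_apply_ne (E := fun _ : ℕ => ℝ) ⊤ b.1 (1:ℝ) hjb, mul_zero])]
            rw [hx]
            simp only [lp.single_apply_self]
            rw [mul_one, hs]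
            by_cases h0 : 0 ≤ ξ (x ⟨j, h⟩) <;> simp [h0]
          · rw [Finset.sum_eq_zero fun b _ => by
              have hjb : j ≠ b.1 := fun hjb => h (hjb ▸ b.2)
              simp only [hx]
              rw [lp.single_apply_ne (E := fun _ : ℕ => ℝ) ⊤ b.1 (1:ℝ) hjb, mul_zero]]
            norm_num
        have hynorm : ‖y‖ ≤ 1 := lp.norm_le_of_forall_le zero_le_one hyj
        have hξy : ξ y = ∑ i : Fin n, |ξ (x i)| := by
          rw [hy, map_sum]
          refine Finset.sum_congr rfl fun i _ => ?_
          rw [map_smul, smul_eq_mul, hs]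
          by_cases h0 : 0 ≤ ξ (x i)
          · simp [h0, abs_of_nonneg h0]
          · simp [h0, abs_of_neg (lt_of_not_ge h0)]
        calc ∑ i : Fin n, |ξ (x i)| = ξ y := hξy.symm
          _ ≤ ‖ξ y‖ := le_abs_self _
          _ ≤ ‖ξ‖ * ‖y‖ := ξ.le_opNorm y
          _ ≤ 1 * 1 := mul_le_mul hξ hynorm (norm_nonneg _) zero_le_one
          _ = 1 := one_mul 1
      have hsq : ∑ i : Fin n, |ξ (x i)| ^ (2:ℝ) ≤ 1 := by
        refine le_trans (Finset.sum_le_sum fun i _ => ?_) hsum1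
        have h1 : |ξ (x i)| ≤ 1 :=
          le_trans (Finset.single_le_sum (f := fun i : Fin n => |ξ (x i)|) (fun j _ => abs_nonneg _) (Finset.mem_univ i)) hsum1
        have h0 : (0:ℝ) ≤ |ξ (x i)| := abs_nonneg _
        have : |ξ (x i)| ^ (2:ℝ) = |ξ (x i)| ^ (2:ℕ) := by
          rw [← Real.rpow_natCast]; norm_num
        rw [this]
        exact pow_le_of_le_one h0 h1 two_ne_zero
      exact Real.rpow_le_one (Finset.sum_nonneg fun i _ => Real.rpow_nonneg (abs_nonneg _) _)
        hsq (by norm_num)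
    -- compute norms
    have hDx : ∀ i : Fin n, ‖D (x i)‖ = ‖a i.1‖ := by
      intro i
      have : D (x i) = lp.single P i.1 (a i.1) := by
        apply lp.ext
        funext m
        rw [hDcoord]
        by_cases h : m = i.1
        · subst h
          rw [hx]
          simp [lp.single_apply_self]
        · simp only [hx]
          rw [lp.single_apply_ne (E := fun _ : ℕ => ℝ) ⊤ i.1 (1:ℝ) h, mul_zero,
            lp.single_apply_ne (E := fun _ : ℕ => ℝ) P i.1 (a i.1) h]
      rw [this]
      exact lp.norm_single (E := fun _ : ℕ => ℝ) (lt_of_lt_of_le zero_lt_one (Fact.out : 1 ≤ P)) i.1 (a i.1)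
    have hsum : ∑ i : Fin n, ‖D (x i)‖ ^ (2:ℝ) = ∑ i ∈ Finset.range n, (1/((i:ℝ)+1)) := by
      rw [← Fin.sum_univ_eq_sum_range (fun i => (1/((i:ℝ)+1)))]
      exact Finset.sum_congr rfl fun i _ => by rw [hDx i, hterm2]
    have hle : (∑ i ∈ Finset.range n, (1/((i:ℝ)+1))) ^ ((1:ℝ)/2) ≤ C := by
      have := hC n x
      rw [hsum] at this
      calc (∑ i ∈ Finset.range n, (1/((i:ℝ)+1))) ^ ((1:ℝ)/2) ≤ C * weakLpNorm 2 x := this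
        _ ≤ C * 1 := mul_le_mul_of_nonneg_left hweak hC0
        _ = C := mul_one C
    have hS0 : (0:ℝ) ≤ ∑ i ∈ Finset.range n, (1/((i:ℝ)+1)) :=
      Finset.sum_nonneg fun i _ => by positivity
    calc ∑ i ∈ Finset.range n, (1/((i:ℝ)+1))
        = ((∑ i ∈ Finset.range n, (1/((i:ℝ)+1))) ^ ((1:ℝ)/2)) ^ (2:ℕ) := by
          rw [← Real.rpow_natCast _ 2, ← Real.rpow_mul hS0]; norm_num
      _ ≤ C ^ 2 := pow_le_pow_left₀ (Real.rpow_nonneg hS0 _) hle 2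
  have hs' : Summable fun i : ℕ => 1/((i:ℝ)+1) :=
    summable_of_sum_range_le (fun i => by positivity) key
  have : Summable fun n : ℕ => 1 / ((n:ℝ)) := by
    rw [← summable_nat_add_iff 1]
    refine hs'.congr fun n => ?_
    push_cast
    ring_nf
  exact Real.not_summable_one_div_natCast this
end
end

section
/- Let X be a Banach space and q > 2, and suppose ℓ_q embeds isomorphically into X. Then it is false that every bounded operator from ℓ∞ (equivalently from c₀ or a C(K) space) to X is 2-summing; i.e. Π₂(ℓ∞, X) ≠ B(ℓ∞, X). -/
open scoped BigOperators
noncomputable section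

/-!
Let `j : ℓ_q → X` be an isomorphic embedding and pick `a ∈ ℓ_q \ ℓ_2`, e.g. `aₙ = n^{-1/2}`.
Multiplication by `a` is bounded from `ℓ∞` to `ℓ_q`, so `u = j ∘ diag a : ℓ∞ → X` is bounded.
Testing a functional `ξ` of norm `≤ 1` on a vector of signs gives `∑ |ξ eᵢ| ≤ 1` for the unit
vectors `eᵢ` of `ℓ∞`, so a 2-summing `u` would have `∑ ‖u eᵢ‖² < ∞`. But `‖u eᵢ‖ ≥ c |aᵢ|` and
`a ∉ ℓ_2`.
-/

open scoped ENNReal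

theorem exists_memℓp_not_memℓp {p q : ℝ} (hp : 0 < p) (hpq : p < q) :
    ∃ a : ℕ → ℝ, Memℓp a (ENNReal.ofReal q) ∧ ¬ Memℓp a (ENNReal.ofReal p) := by
  have hq : 0 < q := hp.trans hpq
  have hpow (r : ℝ) (n : ℕ) : ‖(n : ℝ) ^ (-1 / p)‖ ^ r = (n : ℝ) ^ (-r / p) := by
    rw [Real.norm_of_nonneg (by positivity), ← Real.rpow_mul (by positivity)]
    ring_nf
  refine ⟨fun n => (n : ℝ) ^ (-1 / p), ?_, ?_⟩
  · rw [memℓp_gen_iff (by rwa [ENNReal.toReal_ofReal hq.le]), ENNReal.toReal_ofReal hq.le]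
    simp only [hpow, Real.summable_nat_rpow]
    rw [div_lt_iff₀ hp]
    linarith
  · rw [memℓp_gen_iff (by rwa [ENNReal.toReal_ofReal hp.le]), ENNReal.toReal_ofReal hp.le]
    simp only [hpow, Real.summable_nat_rpow, neg_div_self hp.ne', lt_irrefl, not_false_eq_true]

section Diagonal

variable {α : Type*} {p : ℝ≥0∞} [Fact (1 ≤ p)]

def lp.diagonalCLM (a : lp (fun _ : α => ℝ) p) :
    lp (fun _ : α => ℝ) ∞ →L[ℝ] lp (fun _ : α => ℝ) p :=
  lp.holderL (p := p) (q := ∞) p (fun _ => ContinuousLinearMap.mul ℝ ℝ) (K := 1)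
    (fun _ => ContinuousLinearMap.opNorm_mul_le ℝ ℝ) a

@[simp]
theorem lp.diagonalCLM_apply (a : lp (fun _ : α => ℝ) p) (x : lp (fun _ : α => ℝ) ∞) (i : α) :
    lp.diagonalCLM a x i = a i * x i :=
  rfl

end Diagonal

theorem sum_abs_apply_single_le_opNorm {α : Type*} [DecidableEq α]
    (ξ : lp (fun _ : α => ℝ) ∞ →L[ℝ] ℝ) (s : Finset α) :
    ∑ i ∈ s, |ξ (lp.single ∞ i 1)| ≤ ‖ξ‖ := by
  set y : lp (fun _ : α => ℝ) ∞ :=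
    ∑ i ∈ s, lp.single ∞ i (SignType.sign (ξ (lp.single ∞ i 1)) : ℝ)
  have hy : ‖y‖ ≤ 1 := by
    refine lp.norm_le_of_forall_le zero_le_one fun k => ?_
    simp only [y, lp.coeFn_sum, Finset.sum_apply, lp.single_apply, Finset.sum_pi_single]
    split_ifs
    · rcases SignType.sign (ξ (lp.single ∞ k 1)) with _ | _ | _ <;> simp
    · simp
  have hξy : ξ y = ∑ i ∈ s, |ξ (lp.single ∞ i 1)| := by
    refine (map_sum ξ _ s).trans (Finset.sum_congr rfl fun i _ => ?_)
    rw [← mul_one (SignType.sign _ : ℝ), ← smul_eq_mul, lp.single_smul, map_smul, smul_eq_mul,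
      sign_mul_self]
  calc ∑ i ∈ s, |ξ (lp.single ∞ i 1)| = ξ y := hξy.symm
    _ ≤ ‖ξ‖ * ‖y‖ := (le_abs_self _).trans (ξ.le_opNorm y)
    _ ≤ ‖ξ‖ := mul_le_of_le_one_right (norm_nonneg ξ) hy

theorem weakLpNorm_single_le_one {p : ℝ} (hp : 1 ≤ p) (n : ℕ) :
    weakLpNorm p (fun i : Fin n => lp.single (E := fun _ : ℕ => ℝ) ∞ i 1) ≤ 1 := by
  refine Real.iSup_le (fun ξ => Real.rpow_le_one (by positivity) ?_ (by positivity)) zero_le_one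
  have hle (i : ℕ) : |ξ.1 (lp.single ∞ i 1)| ≤ 1 :=
    le_trans (by simpa using sum_abs_apply_single_le_opNorm ξ.1 {i}) ξ.2
  calc ∑ i : Fin n, |ξ.1 (lp.single ∞ (i : ℕ) 1)| ^ p
      ≤ ∑ i : Fin n, |ξ.1 (lp.single ∞ (i : ℕ) 1)| :=
        Finset.sum_le_sum fun i _ => Real.rpow_le_self_of_le_one (abs_nonneg _) (hle i) hp
    _ = ∑ i ∈ Finset.range n, |ξ.1 (lp.single ∞ i 1)| :=
        Fin.sum_univ_eq_sum_range (fun i => |ξ.1 (lp.single ∞ i 1)|) n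
    _ ≤ 1 := (sum_abs_apply_single_le_opNorm ξ.1 _).trans ξ.2

theorem IsQPSummingWith.summable_norm_rpow_apply_single {Y : Type*} [NormedAddCommGroup Y]
    [NormedSpace ℝ Y] {p C : ℝ} {u : lp (fun _ : ℕ => ℝ) ∞ →L[ℝ] Y} (hp : 1 ≤ p) (hC : 0 ≤ C)
    (hu : IsQPSummingWith p p u C) : Summable fun i => ‖u (lp.single ∞ i 1)‖ ^ p := by
  refine summable_of_sum_range_le (c := C ^ p) (fun i => by positivity) fun n => ?_
  have h := (hu n fun i : Fin n => lp.single ∞ (i : ℕ) 1).trans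
    (mul_le_of_le_one_right hC (weakLpNorm_single_le_one hp n))
  rwa [Fin.sum_univ_eq_sum_range (fun i => ‖u (lp.single ∞ i 1)‖ ^ p), one_div,
    Real.rpow_inv_le_iff_of_pos (by positivity) hC (by positivity)] at h

/-- if `ℓ_q` (q > 2) embeds isomorphically into `X` then not every
bounded operator `ℓ∞ → X` is 2-summing. -/
theorem not_all_two_summing_of_lq_embeds (X : Type*) [NormedAddCommGroup X]
    [NormedSpace ℝ X] (q : ℝ) (hq : 2 < q) [Fact (1 ≤ ENNReal.ofReal q)]
    (hembed : ∃ j : lp (fun _ : ℕ => ℝ) (ENNReal.ofReal q) →L[ℝ] X,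
      ∃ c > (0:ℝ), ∀ x, c * ‖x‖ ≤ ‖j x‖) :
    ¬ ∀ u : lp (fun _ : ℕ => ℝ) ⊤ →L[ℝ] X, ∃ C, 0 ≤ C ∧ IsQPSummingWith 2 2 u C := by
  intro h
  obtain ⟨j, c, hc, hj⟩ := hembed
  obtain ⟨a, haq, ha2⟩ := exists_memℓp_not_memℓp two_pos hq
  set u := j.comp (lp.diagonalCLM ⟨a, haq⟩)
  obtain ⟨C, hC, hu⟩ := h u
  have hlower (i : ℕ) : c * ‖a i‖ ≤ ‖u (lp.single ∞ i 1)‖ := by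
    refine le_trans ?_ (hj _)
    gcongr
    simpa using lp.norm_apply_le_norm (zero_lt_one.trans_le Fact.out).ne'
      (lp.diagonalCLM ⟨a, haq⟩ (lp.single ∞ i 1)) i
  apply ha2
  rw [memℓp_gen_iff (by simp), ENNReal.toReal_ofReal zero_le_two]
  have hsum := hu.summable_norm_rpow_apply_single one_le_two hC
  refine (hsum.div_const (c ^ (2 : ℝ))).of_nonneg_of_le (fun _ => by positivity) fun i => ?_
  rw [le_div_iff₀ (by positivity), mul_comm, ← Real.mul_rpow hc.le (norm_nonneg _)]
  exact Real.rpow_le_rpow (by positivity) (hlower i) zero_le_two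
end
end

section
/- Suppose X is a Banach space and there is a constant K such that every finite rank operator u : X → X satisfies π₁(u) ≤ K‖u‖. Then for every Banach space embedding of ℓ_q into X with q > 2 one obtains a contradiction; i.e., if ℓ_q (q > 2) embeds isomorphically into X, then there is no constant K with π₁(u) ≤ K‖u‖ for all finite rank u : X → X. -/
open scoped BigOperators
noncomputable section

/-! If `j : ℓ_q → X` is an isomorphic embedding with `c‖y‖ ≤ ‖j y‖`, Hahn–Banach extends the
coordinate functionals of `ℓ_q` through `j` to functionals `gᵢ` on `X` of norm at most `c⁻¹`.
The finite rank operator `uₙ = ∑_{i<n} gᵢ ⊗ j eᵢ` fixes the vectors `j eᵢ`, which have norm at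
least `c`, while both `‖uₙ‖` and the weak `ℓ₁`-norm of `(j eᵢ)_{i<n}` are `O(n^{1/q})`, since
`‖∑_{i<n} aᵢ eᵢ‖_q ≤ n^{1/q} maxᵢ |aᵢ|`. Hence `π₁(uₙ) ≤ K‖uₙ‖` would give `c n ≤ K' n^{2/q}`,
which fails for large `n` because `q > 2`. -/

theorem exists_strongDual_comp_eq_of_mul_norm_le {𝕜 E F : Type*} [RCLike 𝕜]
    [NormedAddCommGroup E] [NormedSpace 𝕜 E] [NormedAddCommGroup F] [NormedSpace 𝕜 F]
    (j : E →L[𝕜] F) {c : ℝ} (hc : 0 < c) (hj : ∀ x, c * ‖x‖ ≤ ‖j x‖) (φ : StrongDual 𝕜 E) :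
    ∃ g : StrongDual 𝕜 F, g.comp j = φ ∧ ‖g‖ ≤ c⁻¹ * ‖φ‖ := by
  have hinj : Function.Injective j := fun x y hxy => by
    have := hj (x - y)
    rw [map_sub, hxy, sub_self, norm_zero] at this
    exact sub_eq_zero.1 (norm_le_zero_iff.1 (nonpos_of_mul_nonpos_right this hc))
  set e := LinearEquiv.ofInjective (j : E →ₗ[𝕜] F) hinj
  have hje : ∀ z, j (e.symm z) = z := fun z => congrArg Subtype.val (e.apply_symm_apply z)
  have hbound : ∀ z, ‖φ (e.symm z)‖ ≤ c⁻¹ * ‖φ‖ * ‖z‖ := fun z => calc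
    ‖φ (e.symm z)‖ ≤ ‖φ‖ * ‖e.symm z‖ := φ.le_opNorm _
    _ ≤ ‖φ‖ * (c⁻¹ * ‖z‖) := by
      gcongr
      rw [le_inv_mul_iff₀ hc]
      exact (hj _).trans_eq (congrArg norm (hje z))
    _ = c⁻¹ * ‖φ‖ * ‖z‖ := by ring
  obtain ⟨g, hg, hgφ⟩ := exists_extension_norm_eq _
    ((φ.toLinearMap ∘ₗ e.symm.toLinearMap).mkContinuous _ hbound)
  refine ⟨g, ContinuousLinearMap.ext fun x => ?_,
    hgφ ▸ LinearMap.mkContinuous_norm_le _ (by positivity) _⟩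
  simpa [e] using hg (e x)

theorem lp.norm_evalCLM_le {α : Type*} {E : α → Type*} [∀ i, NormedAddCommGroup (E i)]
    [∀ i, NormedSpace ℝ (E i)] (p : ENNReal) [Fact (1 ≤ p)] (i : α) :
    ‖lp.evalCLM ℝ E p i‖ ≤ 1 :=
  LinearMap.mkContinuous_norm_le _ zero_le_one _

theorem lp.norm_sum_single_le {α : Type*} [DecidableEq α] {E : α → Type*}
    [∀ i, NormedAddCommGroup (E i)]
    {p : ENNReal} (hp : 0 < p.toReal) (f : ∀ i, E i) (s : Finset α) {A : ℝ} (hA : 0 ≤ A)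
    (hf : ∀ i ∈ s, ‖f i‖ ≤ A) :
    ‖∑ i ∈ s, lp.single p i (f i)‖ ≤ (s.card : ℝ) ^ p.toReal⁻¹ * A := by
  rw [← Real.rpow_le_rpow_iff (lp.norm_nonneg' _) (by positivity) hp, lp.norm_sum_single hp,
    Real.mul_rpow (by positivity) hA, Real.rpow_inv_rpow (Nat.cast_nonneg _) hp.ne']
  calc ∑ i ∈ s, ‖f i‖ ^ p.toReal ≤ ∑ _i ∈ s, A ^ p.toReal :=
        Finset.sum_le_sum fun i hi => by gcongr; exact hf i hi
    _ = s.card * A ^ p.toReal := by rw [Finset.sum_const, nsmul_eq_mul]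

theorem lp.norm_sum_fin_single_le {E : ℕ → Type*} [∀ i, NormedAddCommGroup (E i)] {p : ENNReal}
    (hp : 0 < p.toReal) {n : ℕ} (a : ∀ i : Fin n, E i) {A : ℝ} (hA : 0 ≤ A)
    (ha : ∀ i, ‖a i‖ ≤ A) :
    ‖∑ i : Fin n, lp.single p (i : ℕ) (a i)‖ ≤ (n : ℝ) ^ p.toReal⁻¹ * A := by
  let b : ∀ m, E m := fun m => if h : m < n then a ⟨m, h⟩ else 0
  have hab : ∑ i : Fin n, lp.single p (i : ℕ) (a i) =
      ∑ m ∈ Finset.range n, lp.single p m (b m) := by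
    rw [← Fin.sum_univ_eq_sum_range (fun m => lp.single p m (b m))]
    simp [b]
  rw [hab]
  simpa using lp.norm_sum_single_le hp b (Finset.range n) hA fun m hm => by
    simpa [b, Finset.mem_range.1 hm] using ha _

open Filter in
theorem exists_natCast_mul_rpow_lt {c r : ℝ} (hc : 0 < c) (hr : r < 1) (M : ℝ) :
    ∃ n : ℕ, M * (n : ℝ) ^ r < c * n := by
  have hgrow : Tendsto (fun n : ℕ => (n : ℝ) ^ (1 - r)) atTop atTop :=
    (tendsto_rpow_atTop (sub_pos.2 hr)).comp tendsto_natCast_atTop_atTop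
  obtain ⟨n, hn, hMn⟩ := ((hgrow.eventually_gt_atTop (M / c)).and (eventually_ge_atTop 1)).exists
  have hn0 : (0 : ℝ) < n := by exact_mod_cast hMn
  refine ⟨n, ?_⟩
  calc M * (n : ℝ) ^ r < c * (n : ℝ) ^ (1 - r) * (n : ℝ) ^ r := by
        gcongr
        rwa [div_lt_iff₀' hc] at hn
    _ = c * n := by rw [mul_assoc, ← Real.rpow_add hn0, sub_add_cancel, Real.rpow_one]

section Summing

variable {X Y : Type*} [NormedAddCommGroup X] [NormedSpace ℝ X] [NormedAddCommGroup Y]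
  [NormedSpace ℝ Y]

theorem finiteRank_sum_smulRight {ι : Type*} (s : Finset ι) (φ : ι → StrongDual ℝ X)
    (y : ι → Y) : FiniteRank (∑ i ∈ s, (φ i).smulRight (y i)) := by
  have hspan : LinearMap.range ((∑ i ∈ s, (φ i).smulRight (y i) : X →L[ℝ] Y) : X →ₗ[ℝ] Y) ≤
      Submodule.span ℝ (y '' s) := by
    rintro _ ⟨z, rfl⟩
    simp only [ContinuousLinearMap.coe_coe, sum_apply, ContinuousLinearMap.smulRight_apply]
    exact Submodule.sum_mem _ fun i hi =>
      Submodule.smul_mem _ _ (Submodule.subset_span (Set.mem_image_of_mem y hi))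
  have := FiniteDimensional.span_of_finite ℝ (s.finite_toSet.image y)
  exact Submodule.finiteDimensional_of_le hspan

theorem weakLpNorm_nonneg (p : ℝ) {n : ℕ} (x : Fin n → X) : 0 ≤ weakLpNorm p x :=
  Real.iSup_nonneg fun _ => Real.rpow_nonneg (Finset.sum_nonneg fun _ _ => by positivity) _

theorem weakLpNorm_one_le_of_forall_sign {n : ℕ} (x : Fin n → X) {W : ℝ}
    (hW : ∀ ε : Fin n → ℝ, (∀ i, |ε i| = 1) → ‖∑ i, ε i • x i‖ ≤ W) :
    weakLpNorm 1 x ≤ W := by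
  refine Real.iSup_le (fun ξ => ?_) ((norm_nonneg _).trans (hW 1 fun _ => abs_one))
  set ε : Fin n → ℝ := fun i => if 0 ≤ ξ.1 (x i) then 1 else -1
  have habs : ∀ i, |ξ.1 (x i)| = ε i * ξ.1 (x i) := fun i => by
    by_cases h : 0 ≤ ξ.1 (x i)
    · simp [ε, h, abs_of_nonneg h]
    · simp [ε, h, abs_of_neg (not_le.1 h)]
  calc (∑ i, |ξ.1 (x i)| ^ (1 : ℝ)) ^ (1 / (1 : ℝ)) = ξ.1 (∑ i, ε i • x i) := by
        simp [habs]
    _ ≤ ‖ξ.1‖ * ‖∑ i, ε i • x i‖ := (le_abs_self _).trans (ξ.1.le_opNorm _)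
    _ ≤ 1 * W := by
        gcongr
        · exact ξ.2
        · exact hW ε fun i => by by_cases h : 0 ≤ ξ.1 (x i) <;> simp [ε, h]
    _ = W := one_mul W

theorem IsQPSummingWith.mono {q p : ℝ} {u : X →L[ℝ] Y} {C D : ℝ} (hu : IsQPSummingWith q p u C)
    (hCD : C ≤ D) : IsQPSummingWith q p u D := fun n x =>
  (hu n x).trans (by gcongr; exact weakLpNorm_nonneg p x)

theorem IsQPSummingWith.mul_natCast_le_of_apply_eq {u : X →L[ℝ] X} {C : ℝ}
    (hu : IsQPSummingWith 1 1 u C) {n : ℕ} (x : Fin n → X) (hux : ∀ i, u (x i) = x i) {c : ℝ}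
    (hx : ∀ i, c ≤ ‖x i‖) : c * n ≤ C * weakLpNorm 1 x := calc
  c * n = ∑ _i : Fin n, c := by simp [mul_comm]
  _ ≤ ∑ i, ‖u (x i)‖ := Finset.sum_le_sum fun i _ => (hux i).symm ▸ hx i
  _ ≤ C * weakLpNorm 1 x := by simpa using hu n x

end Summing

section Truncation

variable {X : Type*} [NormedAddCommGroup X] [NormedSpace ℝ X] {p : ENNReal} [Fact (1 ≤ p)]
  (j : lp (fun _ : ℕ => ℝ) p →L[ℝ] X) (g : ℕ → StrongDual ℝ X) (n : ℕ)

def lpTruncation : X →L[ℝ] X :=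
  ∑ i : Fin n, (g i).smulRight (j (lp.single p i 1))

theorem sum_smul_apply_lp_single_one (a : Fin n → ℝ) :
    ∑ i, a i • j (lp.single p i 1) = j (∑ i : Fin n, lp.single p (i : ℕ) (a i)) := by
  simp only [map_sum, ← map_smul, ← lp.single_smul, smul_eq_mul, mul_one]

theorem lpTruncation_apply (z : X) :
    lpTruncation j g n z = j (∑ i : Fin n, lp.single p (i : ℕ) (g i z)) := by
  simp only [lpTruncation, sum_apply, ContinuousLinearMap.smulRight_apply,
    sum_smul_apply_lp_single_one]

theorem weakLpNorm_one_lp_single_le (hp : 0 < p.toReal) :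
    weakLpNorm 1 (fun i : Fin n => j (lp.single p i 1)) ≤ ‖j‖ * (n : ℝ) ^ p.toReal⁻¹ :=
  weakLpNorm_one_le_of_forall_sign _ fun ε hε => calc
    ‖∑ i, ε i • j (lp.single p i 1)‖ = ‖j (∑ i : Fin n, lp.single p (i : ℕ) (ε i))‖ := by
      rw [sum_smul_apply_lp_single_one]
    _ ≤ ‖j‖ * ((n : ℝ) ^ p.toReal⁻¹ * 1) :=
      j.le_of_opNorm_le_of_le le_rfl <| lp.norm_sum_fin_single_le (E := fun _ => ℝ) hp ε
        zero_le_one fun i => (hε i).le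
    _ = ‖j‖ * (n : ℝ) ^ p.toReal⁻¹ := by rw [mul_one]

theorem finiteRank_lpTruncation : FiniteRank (lpTruncation j g n) :=
  finiteRank_sum_smulRight _ _ _

variable {j g}

theorem lpTruncation_apply_single (hgj : ∀ i y, g i (j y) = y i) (i : Fin n) :
    lpTruncation j g n (j (lp.single p i 1)) = j (lp.single p i 1) := by
  rw [lpTruncation_apply]
  congr 1
  simp only [hgj, lp.single_apply]
  refine (Finset.sum_eq_single i (fun k _ hki => ?_) (by simp)).trans (by simp)
  rw [Pi.single_eq_of_ne (Fin.val_injective.ne hki), lp.single_zero]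

theorem norm_lpTruncation_le (hp : 0 < p.toReal) {B : ℝ} (hg : ∀ i, ‖g i‖ ≤ B) :
    ‖lpTruncation j g n‖ ≤ ‖j‖ * ((n : ℝ) ^ p.toReal⁻¹ * B) := by
  have hB : 0 ≤ B := (norm_nonneg _).trans (hg 0)
  refine ContinuousLinearMap.opNorm_le_bound _ (by positivity) fun z => ?_
  rw [lpTruncation_apply]
  calc ‖j (∑ i : Fin n, lp.single p (i : ℕ) (g i z))‖
      ≤ ‖j‖ * ((n : ℝ) ^ p.toReal⁻¹ * (B * ‖z‖)) := by
        refine j.le_of_opNorm_le_of_le le_rfl ?_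
        exact lp.norm_sum_fin_single_le (E := fun _ => ℝ) hp _ (by positivity) fun i =>
          (g i).le_of_opNorm_le (hg i) z
    _ = ‖j‖ * ((n : ℝ) ^ p.toReal⁻¹ * B) * ‖z‖ := by ring

end Truncation

theorem mul_natCast_le_of_forall_isQPSummingWith {X : Type*} [NormedAddCommGroup X]
    [NormedSpace ℝ X] {p : ENNReal} [Fact (1 ≤ p)] (hp : 0 < p.toReal)
    (j : lp (fun _ : ℕ => ℝ) p →L[ℝ] X) {c : ℝ} (hc : 0 < c) (hj : ∀ y, c * ‖y‖ ≤ ‖j y‖)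
    {K : ℝ} (hK0 : 0 ≤ K)
    (hK : ∀ u : X →L[ℝ] X, FiniteRank u → IsQPSummingWith 1 1 u (K * ‖u‖)) (n : ℕ) :
    c * n ≤ K * ‖j‖ ^ 2 * c⁻¹ * (n : ℝ) ^ (p.toReal⁻¹ * 2) := by
  choose g hgj hg using fun i =>
    exists_strongDual_comp_eq_of_mul_norm_le j hc hj (lp.evalCLM ℝ (fun _ : ℕ => ℝ) p i)
  have hg' : ∀ i, ‖g i‖ ≤ c⁻¹ := fun i =>
    (hg i).trans (mul_le_of_le_one_right (by positivity) (lp.norm_evalCLM_le p i))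
  have hgj' : ∀ i y, g i (j y) = y i := fun i y => congr($(hgj i) y)
  have hx : ∀ i : Fin n, c ≤ ‖j (lp.single p i 1)‖ := fun i => by
    simpa [lp.norm_single (zero_lt_one.trans_le Fact.out)] using hj (lp.single p i 1)
  calc c * n ≤ K * ‖lpTruncation j g n‖ * weakLpNorm 1 (fun i : Fin n => j (lp.single p i 1)) :=
        (hK _ (finiteRank_lpTruncation j g n)).mul_natCast_le_of_apply_eq _
          (lpTruncation_apply_single n hgj') hx
    _ ≤ K * (‖j‖ * ((n : ℝ) ^ p.toReal⁻¹ * c⁻¹)) * (‖j‖ * (n : ℝ) ^ p.toReal⁻¹) := by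
        gcongr
        · exact weakLpNorm_nonneg 1 _
        · exact norm_lpTruncation_le n hp hg'
        · exact weakLpNorm_one_lp_single_le j n hp
    _ = K * ‖j‖ ^ 2 * c⁻¹ * (n : ℝ) ^ (p.toReal⁻¹ * 2) := by
        rw [Real.rpow_mul (Nat.cast_nonneg n), Real.rpow_two]
        ring

/-- if `ℓ_q` (q > 2) embeds isomorphically into `X`, there is no
constant `K` with `π₁(u) ≤ K‖u‖` for all finite rank `u : X → X`. -/
theorem no_uniform_one_summing_of_lq_embeds (X : Type*) [NormedAddCommGroup X]
    [NormedSpace ℝ X] (q : ℝ) (hq : 2 < q) [Fact (1 ≤ ENNReal.ofReal q)]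
    (hembed : ∃ j : lp (fun _ : ℕ => ℝ) (ENNReal.ofReal q) →L[ℝ] X,
      ∃ c > (0:ℝ), ∀ x, c * ‖x‖ ≤ ‖j x‖) :
    ¬ ∃ K : ℝ, ∀ u : X →L[ℝ] X, FiniteRank u → IsQPSummingWith 1 1 u (K * ‖u‖) := by
  rintro ⟨K, hK⟩
  obtain ⟨j, c, hc, hj⟩ := hembed
  have hq' : (ENNReal.ofReal q).toReal = q := ENNReal.toReal_ofReal (by linarith)
  have hK' : ∀ u : X →L[ℝ] X, FiniteRank u → IsQPSummingWith 1 1 u (max K 0 * ‖u‖) :=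
    fun u hu => (hK u hu).mono (by gcongr; exact le_max_left _ _)
  obtain ⟨n, hn⟩ := exists_natCast_mul_rpow_lt hc
    (show q⁻¹ * 2 < 1 by rw [inv_mul_lt_iff₀ (by linarith)]; linarith) (max K 0 * ‖j‖ ^ 2 * c⁻¹)
  have := mul_natCast_le_of_forall_isQPSummingWith (by rw [hq']; linarith) j hc hj
    (le_max_right K 0) hK' n
  rw [hq'] at this
  linarith
end
end
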